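/- Let N ≥ 1 be an integer and η > 0. Let U ⊆ ℝ^N be the open set of tuples (E_1, …, E_N) with pairwise distinct coordinates, and let f : U → ℝ be twice continuously differentiable. Define g(E) = (N/(2η)) Σ_{i=1}^N E_i² and Δ(E) = ∏_{k<l} (E_l − E_k). Then at every point E ∈ U, e^{−g(E)} Δ(E) · (L_SD[Δ^{−1} e^{g} f])(E) = (η/N) Σ_{i=1}^N ∂²f/∂E_i²(E) − (N/η) Σ_{i=1}^N E_i² f(E), where L_SD is the differential operator L_SD = (η/N) Σ_{i=1}^N (∂/∂E_i)² + (η/N) Σ_{i≠j} (1/(E_i − E_j)) (∂/∂E_i − ∂/∂E_j) − 2 Σ_{k=1}^N E_k ∂/∂E_k − N², applied to the function E ↦ Δ(E)^{−1} e^{g(E)} f(E) on U. -/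

import Mathlib

open MeasureTheory Matrix Filter

noncomputable section

/-- The Vandermonde determinant `Δ(E) = ∏_{k<l} (E_l - E_k)`. -/
def vdm (N : ℕ) (E : Fin N → ℝ) : ℝ :=
  ∏ k : Fin N, ∏ l ∈ Finset.Ioi k, (E l - E k)

/-- Partial derivative in the `i`-th coordinate. -/
def pd (N : ℕ) (i : Fin N) (f : (Fin N → ℝ) → ℝ) (E : Fin N → ℝ) : ℝ :=
  deriv (fun t => f (Function.update E i t)) (E i)

/-- The Schwinger–Dyson operator `L_SD` applied to `f` at `E`:
`(η/N) Σ_i ∂²f/∂E_i² + (η/N) Σ_{i≠j} (1/(E_i−E_j))(∂_i f − ∂_j f) − 2 Σ_k E_k ∂_k f − N² f`. -/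
def LSD (N : ℕ) (η : ℝ) (f : (Fin N → ℝ) → ℝ) (E : Fin N → ℝ) : ℝ :=
  (η / N) * (∑ i, pd N i (pd N i f) E)
    + (η / N) * (∑ p ∈ Finset.univ.filter (fun p : Fin N × Fin N => p.1 ≠ p.2),
        (1 / (E p.1 - E p.2)) * (pd N p.1 f E - pd N p.2 f E))
    - 2 * (∑ k, E k * pd N k f E)
    - (N : ℝ) ^ 2 * f E

open Finset

section Aux

def sfn (N : ℕ) (E : Fin N → ℝ) (i : Fin N) : ℝ := ∑ j ∈ Finset.univ.erase i, (E i - E j)⁻¹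
def tfn (N : ℕ) (E : Fin N → ℝ) (i : Fin N) : ℝ := ∑ j ∈ Finset.univ.erase i, ((E i - E j)⁻¹)^2
def Dst (N : ℕ) (E : Fin N → ℝ) : Prop := ∀ i j, i ≠ j → E i ≠ E j

section
variable {N : ℕ} {E : Fin N → ℝ} {f : (Fin N → ℝ) → ℝ}

lemma isOpen_dst (N : ℕ) : IsOpen {E : Fin N → ℝ | Dst N E} := by
  have : {E : Fin N → ℝ | Dst N E} = ⋂ i, ⋂ j, ⋂ (_ : i ≠ j), {E : Fin N → ℝ | E i ≠ E j} := by
    ext E; simp [Dst, Set.mem_iInter]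
  rw [this]
  refine isOpen_iInter_of_finite fun i => isOpen_iInter_of_finite fun j => ?_
  refine isOpen_iInter_of_finite fun hij => ?_
  have : Continuous fun E : Fin N → ℝ => E i - E j := (continuous_apply i).sub (continuous_apply j)
  have := isOpen_compl_singleton (x := (0:ℝ)) |>.preimage this
  convert this using 1
  ext E; simp [sub_eq_zero]

lemma vdm_eq_pairs (N : ℕ) (E : Fin N → ℝ) :
    vdm N E = ∏ p ∈ Finset.univ.filter (fun p : Fin N × Fin N => p.1 < p.2), (E p.2 - E p.1) := by
  rw [vdm]
  rw [show (∏ k : Fin N, ∏ l ∈ Finset.Ioi k, (E l - E k))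
      = ∏ x ∈ Finset.univ.sigma (fun k : Fin N => Finset.Ioi k), (E x.2 - E x.1) from
    (Finset.prod_sigma Finset.univ (fun k : Fin N => Finset.Ioi k) (fun x => E x.2 - E x.1)).symm]
  refine Finset.prod_nbij' (fun x => (x.1, x.2)) (fun p => ⟨p.1, p.2⟩) ?_ ?_ ?_ ?_ ?_ <;>
    simp [Finset.mem_sigma]

lemma vdm_ne_zero (hE : Dst N E) : vdm N E ≠ 0 := by
  rw [vdm_eq_pairs]
  refine Finset.prod_ne_zero_iff.2 fun p hp => ?_
  simp only [Finset.mem_filter] at hp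
  exact sub_ne_zero.2 (hE p.2 p.1 (ne_of_gt hp.2))

lemma update_sq_sum (E : Fin N → ℝ) (i : Fin N) (t : ℝ) :
    ∑ j, (Function.update E i t j)^2 = t^2 + ∑ j ∈ Finset.univ.erase i, (E j)^2 := by
  have h : ∀ j, (Function.update E i t j)^2 = Function.update (fun j => (E j)^2) i (t^2) j := by
    intro j
    exact (Function.apply_update (fun _ x => x^2) E i t j)
  simp_rw [h]
  rw [Finset.sum_update_of_mem (Finset.mem_univ i)]
  congr 1
  · exact Finset.sum_congr (by ext j; simp [Finset.mem_erase, eq_comm]) (fun _ _ => rfl)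

lemma hasDerivAt_g_line (η : ℝ) (E : Fin N → ℝ) (i : Fin N) :
    HasDerivAt (fun t => ((N : ℝ) / (2 * η)) * ∑ j, (Function.update E i t j)^2)
      (((N:ℝ)/η) * E i) (E i) := by
  have h1 : (fun t => ((N : ℝ) / (2 * η)) * ∑ j, (Function.update E i t j)^2)
      = fun t => ((N : ℝ) / (2 * η)) * (t^2 + ∑ j ∈ Finset.univ.erase i, (E j)^2) := by
    funext t; rw [update_sq_sum]
  rw [h1]
  have h2 : HasDerivAt (fun t : ℝ => t^2 + ∑ j ∈ Finset.univ.erase i, (E j)^2)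
      (2 * E i) (E i) := by
    simpa using ((hasDerivAt_pow 2 (E i)).add_const (∑ j ∈ Finset.univ.erase i, (E j)^2))
  have := h2.const_mul ((N : ℝ) / (2 * η))
  refine this.congr_deriv ?_
  symm
  by_cases hη : η = 0 <;> ring

lemma sfn_update (E : Fin N → ℝ) (i : Fin N) (t : ℝ) :
    sfn N (Function.update E i t) i = ∑ j ∈ Finset.univ.erase i, (t - E j)⁻¹ := by
  unfold sfn
  refine Finset.sum_congr rfl fun j hj => ?_
  rw [Function.update_self, Function.update_of_ne (Finset.ne_of_mem_erase hj)]

lemma hasDerivAt_sfn_line (hE : Dst N E) (i : Fin N) :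
    HasDerivAt (fun t => sfn N (Function.update E i t) i) (-(tfn N E i)) (E i) := by
  have h : (fun t => sfn N (Function.update E i t) i)
      = fun t => ∑ j ∈ Finset.univ.erase i, (t - E j)⁻¹ := funext fun t => sfn_update E i t
  rw [h]
  have h2 : HasDerivAt (fun t => ∑ j ∈ Finset.univ.erase i, (t - E j)⁻¹)
      (∑ j ∈ Finset.univ.erase i, -(((E i - E j)⁻¹)^2)) (E i) := by
    refine HasDerivAt.fun_sum fun j hj => ?_
    have hne : E i - E j ≠ 0 := sub_ne_zero.2 (hE i j (Finset.ne_of_mem_erase hj).symm)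
    have := ((hasDerivAt_id (E i)).sub_const (E j)).inv hne
    refine this.congr_deriv ?_
    symm
    simp only [id]
    field_simp
  simpa [tfn, Finset.sum_neg_distrib] using h2

lemma erase_filter_lt (i : Fin N) :
    (Finset.univ.erase i).filter (fun j => j < i) = Finset.Iio i := by
  ext j
  simp only [Finset.mem_filter, Finset.mem_erase, Finset.mem_Iio, Finset.mem_univ, and_true,
    true_and]
  exact ⟨fun h => h.2, fun h => ⟨ne_of_lt h, h⟩⟩

lemma erase_filter_not_lt (i : Fin N) :
    (Finset.univ.erase i).filter (fun j => ¬ j < i) = Finset.Ioi i := by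
  ext j
  simp only [Finset.mem_filter, Finset.mem_erase, Finset.mem_Ioi, Finset.mem_univ, and_true,
    true_and]
  exact ⟨fun h => lt_of_le_of_ne (le_of_not_gt h.2) (Ne.symm h.1),
    fun h => ⟨(ne_of_lt h).symm, not_lt_of_gt h⟩⟩

lemma key_sum (E : Fin N → ℝ) (i : Fin N) :
    ∑ p ∈ Finset.univ.filter (fun p : Fin N × Fin N => p.1 < p.2),
      ((if p.2 = i then (1:ℝ) else 0) - (if p.1 = i then 1 else 0)) * (E p.2 - E p.1)⁻¹
      = sfn N E i := by
  classical
  have hsplit : ∀ p : Fin N × Fin N, p.1 < p.2 →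
      ((if p.2 = i then (1:ℝ) else 0) - (if p.1 = i then 1 else 0)) * (E p.2 - E p.1)⁻¹
      = (if p.2 = i then (E p.2 - E p.1)⁻¹ else 0) - (if p.1 = i then (E p.2 - E p.1)⁻¹ else 0) := by
    intro p hp
    split_ifs <;> ring
  rw [Finset.sum_congr rfl (fun p hp => hsplit p (Finset.mem_filter.1 hp).2),
    Finset.sum_sub_distrib]
  have h1 : ∑ p ∈ Finset.univ.filter (fun p : Fin N × Fin N => p.1 < p.2),
      (if p.2 = i then (E p.2 - E p.1)⁻¹ else 0) = ∑ k ∈ Finset.Iio i, (E i - E k)⁻¹ := by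
    rw [← Finset.sum_filter]
    refine Finset.sum_nbij' (fun p => p.1) (fun k => (k, i)) ?_ ?_ ?_ ?_ ?_
    · intro p hp
      simp only [Finset.mem_filter, Finset.mem_univ, true_and] at hp
      exact Finset.mem_Iio.2 (hp.2 ▸ hp.1)
    · intro k hk
      simp only [Finset.mem_Iio] at hk
      simp only [Finset.mem_filter, Finset.mem_univ, true_and]
      exact ⟨hk, trivial⟩
    · intro p hp
      simp only [Finset.mem_filter, Finset.mem_univ, true_and] at hp
      exact Prod.ext rfl hp.2.symm
    · intro k _; rfl
    · intro p hp
      simp only [Finset.mem_filter, Finset.mem_univ, true_and] at hp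
      rw [hp.2]
  have h2 : ∑ p ∈ Finset.univ.filter (fun p : Fin N × Fin N => p.1 < p.2),
      (if p.1 = i then (E p.2 - E p.1)⁻¹ else 0) = ∑ l ∈ Finset.Ioi i, (E l - E i)⁻¹ := by
    rw [← Finset.sum_filter]
    refine Finset.sum_nbij' (fun p => p.2) (fun l => (i, l)) ?_ ?_ ?_ ?_ ?_
    · intro p hp
      simp only [Finset.mem_filter, Finset.mem_univ, true_and] at hp
      exact Finset.mem_Ioi.2 (hp.2 ▸ hp.1)
    · intro l hl
      simp only [Finset.mem_Ioi] at hl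
      simp only [Finset.mem_filter, Finset.mem_univ, true_and]
      exact ⟨hl, trivial⟩
    · intro p hp
      simp only [Finset.mem_filter, Finset.mem_univ, true_and] at hp
      exact Prod.ext hp.2.symm rfl
    · intro l _; rfl
    · intro p hp
      simp only [Finset.mem_filter, Finset.mem_univ, true_and] at hp
      rw [hp.2]
  rw [h1, h2, sfn, ← Finset.sum_filter_add_sum_filter_not (Finset.univ.erase i) (fun j => j < i),
    erase_filter_lt, erase_filter_not_lt]
  have h3 : ∑ l ∈ Finset.Ioi i, (E i - E l)⁻¹ = - ∑ l ∈ Finset.Ioi i, (E l - E i)⁻¹ := by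
    rw [← Finset.sum_neg_distrib]
    exact Finset.sum_congr rfl fun l _ => by rw [show E i - E l = -(E l - E i) by ring, neg_inv]
  rw [h3]
  ring

lemma hasDerivAt_vdm_line (hE : Dst N E) (i : Fin N) :
    HasDerivAt (fun t => vdm N (Function.update E i t)) (vdm N E * sfn N E i) (E i) := by
  classical
  set P : Finset (Fin N × Fin N) := Finset.univ.filter (fun p : Fin N × Fin N => p.1 < p.2)
    with hP
  have hne : ∀ p ∈ P, E p.2 - E p.1 ≠ 0 := fun p hp =>
    sub_ne_zero.2 (hE p.2 p.1 (ne_of_gt (Finset.mem_filter.1 hp).2))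
  have hfac : ∀ p ∈ P,
      HasDerivAt (fun t => Function.update E i t p.2 - Function.update E i t p.1)
        ((if p.2 = i then (1:ℝ) else 0) - (if p.1 = i then 1 else 0)) (E i) := by
    intro p _
    have d2 : HasDerivAt (fun t => Function.update E i t p.2)
        (if p.2 = i then (1:ℝ) else 0) (E i) := by
      have h2 : (fun t => Function.update E i t p.2) = fun t => if p.2 = i then t else E p.2 := by
        funext t; simp [Function.update_apply]
      rw [h2]
      split_ifs with h
      · exact hasDerivAt_id _
      · exact hasDerivAt_const _ _
    have d1 : HasDerivAt (fun t => Function.update E i t p.1)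
        (if p.1 = i then (1:ℝ) else 0) (E i) := by
      have h1 : (fun t => Function.update E i t p.1) = fun t => if p.1 = i then t else E p.1 := by
        funext t; simp [Function.update_apply]
      rw [h1]
      split_ifs with h
      · exact hasDerivAt_id _
      · exact hasDerivAt_const _ _
    exact d2.sub d1
  have hprod := HasDerivAt.fun_finset_prod hfac
  have hfun : (fun x => ∏ p ∈ P, (Function.update E i x p.2 - Function.update E i x p.1))
      = fun t => vdm N (Function.update E i t) := by
    funext t; rw [vdm_eq_pairs]
  have hval : (∑ p ∈ P, (∏ q ∈ P.erase p,
        (Function.update E i (E i) q.2 - Function.update E i (E i) q.1)) •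
        ((if p.2 = i then (1:ℝ) else 0) - (if p.1 = i then 1 else 0)))
      = vdm N E * sfn N E i := by
    rw [← key_sum E i, Finset.mul_sum]
    refine Finset.sum_congr rfl fun p hp => ?_
    rw [Function.update_eq_self]
    have herase : (∏ q ∈ P.erase p, (E q.2 - E q.1)) = vdm N E * (E p.2 - E p.1)⁻¹ := by
      have := Finset.prod_erase_mul P (fun q => E q.2 - E q.1) hp
      field_simp [hne p hp]
      rw [vdm_eq_pairs]
      exact this
    rw [herase, smul_eq_mul]
    ring
  exact hfun ▸ hval ▸ hprod
lemma sum_offdiag (h : Fin N × Fin N → ℝ) :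
    ∑ p ∈ Finset.univ.filter (fun p : Fin N × Fin N => p.1 ≠ p.2), h p
      = ∑ i, ∑ j ∈ Finset.univ.erase i, h (i, j) := by
  rw [Finset.sum_filter, Fintype.sum_prod_type]
  refine Finset.sum_congr rfl fun i _ => ?_
  rw [← Finset.sum_filter]
  refine Finset.sum_congr ?_ fun _ _ => rfl
  ext j
  simp [ne_comm, eq_comm]

lemma sum_offdiag_swap (h : Fin N × Fin N → ℝ) :
    ∑ p ∈ Finset.univ.filter (fun p : Fin N × Fin N => p.1 ≠ p.2), h p
      = ∑ p ∈ Finset.univ.filter (fun p : Fin N × Fin N => p.1 ≠ p.2), h (p.2, p.1) := by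
  refine Finset.sum_nbij' (fun p => (p.2, p.1)) (fun p => (p.2, p.1)) ?_ ?_ ?_ ?_ ?_ <;>
    simp [ne_comm]

lemma sum_offdiag_first (F : Fin N → ℝ) :
    ∑ p ∈ Finset.univ.filter (fun p : Fin N × Fin N => p.1 ≠ p.2), (E p.1 - E p.2)⁻¹ * F p.1
      = ∑ i, sfn N E i * F i := by
  rw [sum_offdiag]
  refine Finset.sum_congr rfl fun i _ => ?_
  rw [sfn, Finset.sum_mul]

lemma sum_offdiag_pair (F : Fin N → ℝ) :
    ∑ p ∈ Finset.univ.filter (fun p : Fin N × Fin N => p.1 ≠ p.2),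
      (E p.1 - E p.2)⁻¹ * (F p.1 - F p.2) = 2 * ∑ i, sfn N E i * F i := by
  have h2 : ∑ p ∈ Finset.univ.filter (fun p : Fin N × Fin N => p.1 ≠ p.2),
      (E p.1 - E p.2)⁻¹ * F p.2
      = - ∑ p ∈ Finset.univ.filter (fun p : Fin N × Fin N => p.1 ≠ p.2),
        (E p.1 - E p.2)⁻¹ * F p.1 := by
    rw [sum_offdiag_swap (fun p => (E p.1 - E p.2)⁻¹ * F p.2), ← Finset.sum_neg_distrib]
    refine Finset.sum_congr rfl fun p _ => ?_
    rw [show E (p.2, p.1).1 - E (p.2, p.1).2 = -(E p.1 - E p.2) from by ring, inv_neg]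
    ring
  calc ∑ p ∈ Finset.univ.filter (fun p : Fin N × Fin N => p.1 ≠ p.2),
        (E p.1 - E p.2)⁻¹ * (F p.1 - F p.2)
      = (∑ p ∈ Finset.univ.filter (fun p : Fin N × Fin N => p.1 ≠ p.2),
          (E p.1 - E p.2)⁻¹ * F p.1)
        - ∑ p ∈ Finset.univ.filter (fun p : Fin N × Fin N => p.1 ≠ p.2),
          (E p.1 - E p.2)⁻¹ * F p.2 := by
        rw [← Finset.sum_sub_distrib]
        exact Finset.sum_congr rfl fun p _ => by ring
    _ = 2 * ∑ i, sfn N E i * F i := by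
        rw [h2, sum_offdiag_first F]
        ring

lemma sum_offdiag_count (hN : 1 ≤ N) (hE : Dst N E) :
    ∑ p ∈ Finset.univ.filter (fun p : Fin N × Fin N => p.1 ≠ p.2),
      (E p.1 - E p.2)⁻¹ * (E p.1 - E p.2) = (N:ℝ)^2 - N := by
  rw [sum_offdiag]
  have : ∀ i : Fin N, ∑ j ∈ Finset.univ.erase i, (E i - E j)⁻¹ * (E i - E j) = (N:ℝ) - 1 := by
    intro i
    have : ∀ j ∈ Finset.univ.erase i, (E i - E j)⁻¹ * (E i - E j) = 1 := fun j hj =>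
      inv_mul_cancel₀ (sub_ne_zero.2 (hE i j (Finset.ne_of_mem_erase hj).symm))
    rw [Finset.sum_congr rfl this, Finset.sum_const, Finset.card_erase_of_mem (Finset.mem_univ i),
      Finset.card_univ, Fintype.card_fin]
    have : ((N - 1 : ℕ) : ℝ) = (N:ℝ) - 1 := by
      rw [Nat.cast_sub hN]; norm_num
    simp [this]
  rw [Finset.sum_congr rfl fun i _ => this i, Finset.sum_const, Finset.card_univ,
    Fintype.card_fin]
  simp
  ring
lemma triple_zero {a b c : ℝ} (hab : a ≠ b) (hac : a ≠ c) (hbc : b ≠ c) :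
    (a-b)⁻¹*(a-c)⁻¹ + (b-c)⁻¹*(b-a)⁻¹ + (c-a)⁻¹*(c-b)⁻¹ = 0 := by
  have h1 : a - b ≠ 0 := sub_ne_zero.2 hab
  have h2 : a - c ≠ 0 := sub_ne_zero.2 hac
  have h3 : b - c ≠ 0 := sub_ne_zero.2 hbc
  have h4 : b - a ≠ 0 := sub_ne_zero.2 hab.symm
  have h5 : c - a ≠ 0 := sub_ne_zero.2 hac.symm
  have h6 : c - b ≠ 0 := sub_ne_zero.2 hbc.symm
  field_simp
  ring

def Tri (N : ℕ) : Finset (Fin N × Fin N × Fin N) :=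
  Finset.univ.filter (fun q => q.1 ≠ q.2.1 ∧ q.1 ≠ q.2.2 ∧ q.2.1 ≠ q.2.2)

lemma sum_tri (h : Fin N → Fin N → Fin N → ℝ) :
    ∑ q ∈ Tri N, h q.1 q.2.1 q.2.2
      = ∑ i, ∑ j ∈ Finset.univ.erase i, ∑ k ∈ (Finset.univ.erase i).erase j, h i j k := by
  classical
  rw [Tri, Finset.sum_filter, Fintype.sum_prod_type]
  refine Finset.sum_congr rfl fun i _ => ?_
  rw [Fintype.sum_prod_type]
  have e1 : ∀ j : Fin N,
      (∑ k, if i ≠ j ∧ i ≠ k ∧ j ≠ k then h i j k else 0)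
      = if j ∈ Finset.univ.erase i then ∑ k ∈ (Finset.univ.erase i).erase j, h i j k else 0 := by
    intro j
    by_cases hj : j = i
    · subst hj; simp
    · rw [if_pos (by simp [hj])]
      have e2 : ∀ k, (if i ≠ j ∧ i ≠ k ∧ j ≠ k then h i j k else 0)
          = if k ∈ (Finset.univ.erase i).erase j then h i j k else 0 := by
        intro k
        simp only [Finset.mem_erase, Finset.mem_univ, and_true]
        split_ifs with h1 h2 <;> first | rfl | (exfalso; tauto)
      simp_rw [e2]
      rw [Finset.sum_ite_mem, Finset.univ_inter]
  simp_rw [e1]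
  rw [Finset.sum_ite_mem, Finset.univ_inter]

def cyc (q : Fin N × Fin N × Fin N) : Fin N × Fin N × Fin N := (q.2.1, q.2.2, q.1)
def cyc2 (q : Fin N × Fin N × Fin N) : Fin N × Fin N × Fin N := (q.2.2, q.1, q.2.1)

lemma sum_cyc (f : Fin N × Fin N × Fin N → ℝ) :
    ∑ q ∈ Tri N, f q = ∑ q ∈ Tri N, f (cyc q) := by
  refine Finset.sum_nbij' cyc2 cyc ?_ ?_ ?_ ?_ ?_ <;>
    simp [Tri, cyc, cyc2, ne_comm] <;> tauto

lemma tri_sum_zero (hE : Dst N E) :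
    ∑ q ∈ Tri N, (E q.1 - E q.2.1)⁻¹ * (E q.1 - E q.2.2)⁻¹ = 0 := by
  set f : Fin N × Fin N × Fin N → ℝ := fun q => (E q.1 - E q.2.1)⁻¹ * (E q.1 - E q.2.2)⁻¹
    with hf
  have h1 : ∑ q ∈ Tri N, f q = ∑ q ∈ Tri N, f (cyc q) := sum_cyc f
  have h2 : ∑ q ∈ Tri N, f (cyc q) = ∑ q ∈ Tri N, f (cyc (cyc q)) := by
    have := sum_cyc (N := N) (fun q => f (cyc q))
    simpa using this
  have h3 : ∑ q ∈ Tri N, (f q + f (cyc q) + f (cyc (cyc q))) = 0 := by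
    refine Finset.sum_eq_zero fun q hq => ?_
    simp only [Tri, Finset.mem_filter, Finset.mem_univ, true_and] at hq
    obtain ⟨hab, hac, hbc⟩ := hq
    have := triple_zero (hE _ _ hab) (hE _ _ hac) (hE _ _ hbc)
    simpa [hf, cyc] using this
  rw [Finset.sum_add_distrib, Finset.sum_add_distrib, ← h1, ← h2, ← h1] at h3
  have : (3:ℝ) * ∑ q ∈ Tri N, f q = 0 := by linarith
  have h4 := mul_eq_zero.1 this
  simpa using h4

lemma sum_sq_eq_sum_tfn (hE : Dst N E) :
    ∑ i, (sfn N E i)^2 = ∑ i, tfn N E i := by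
  classical
  have expand : ∀ i : Fin N, (sfn N E i)^2
      = tfn N E i + ∑ j ∈ Finset.univ.erase i, ∑ k ∈ (Finset.univ.erase i).erase j,
          (E i - E j)⁻¹ * (E i - E k)⁻¹ := by
    intro i
    rw [sfn, sq, Finset.sum_mul_sum, tfn]
    rw [← Finset.sum_add_distrib]
    refine Finset.sum_congr rfl fun j hj => ?_
    rw [show ((E i - E j)⁻¹)^2 = (E i - E j)⁻¹ * (E i - E j)⁻¹ from sq _]
    rw [← Finset.mul_sum, ← Finset.mul_sum, ← mul_add,
      Finset.add_sum_erase _ (fun k => (E i - E k)⁻¹) hj]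
  rw [Finset.sum_congr rfl fun i _ => expand i, Finset.sum_add_distrib]
  rw [← sum_tri (fun i j k => (E i - E j)⁻¹ * (E i - E k)⁻¹), tri_sum_zero hE]
  ring
lemma hasDerivAt_f_line (hf : ContDiffOn ℝ 2 f {E : Fin N → ℝ | Dst N E}) (hE : Dst N E)
    (i : Fin N) :
    HasDerivAt (fun t => f (Function.update E i t)) (pd N i f E) (E i) := by
  have hdf : DifferentiableAt ℝ f E :=
    (hf.contDiffAt ((isOpen_dst N).mem_nhds hE)).differentiableAt (by norm_num)
  have hdf' : DifferentiableAt ℝ f (Function.update E i (E i)) := by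
    rw [Function.update_eq_self]; exact hdf
  have hcu : DifferentiableAt ℝ (fun t => Function.update E i t) (E i) :=
    (hasDerivAt_update E i (E i)).differentiableAt
  have hcomp : DifferentiableAt ℝ (fun t => f (Function.update E i t)) (E i) :=
    DifferentiableAt.comp _ hdf' hcu
  exact hcomp.hasDerivAt

lemma pd_eq_fderiv (hf : ContDiffOn ℝ 2 f {E : Fin N → ℝ | Dst N E}) (hE : Dst N E)
    (i : Fin N) :
    pd N i f E = fderiv ℝ f E (Pi.single i 1) := by
  have hdf : DifferentiableAt ℝ f E :=
    (hf.contDiffAt ((isOpen_dst N).mem_nhds hE)).differentiableAt (by norm_num)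
  have hdf' : HasFDerivAt f (fderiv ℝ f E) (Function.update E i (E i)) := by
    rw [Function.update_eq_self]; exact hdf.hasFDerivAt
  have h := hdf'.comp_hasDerivAt (E i) (hasDerivAt_update E i (E i))
  exact h.deriv

lemma hasDerivAt_pdf_line (hf : ContDiffOn ℝ 2 f {E : Fin N → ℝ | Dst N E}) (hE : Dst N E)
    (i : Fin N) :
    HasDerivAt (fun t => pd N i f (Function.update E i t)) (pd N i (pd N i f) E) (E i) := by
  suffices hD : DifferentiableAt ℝ (fun t => pd N i f (Function.update E i t)) (E i) by
    exact hD.hasDerivAt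
  set G : (Fin N → ℝ) → ℝ := fun E' => fderiv ℝ f E' (Pi.single i 1) with hG
  have hGdiff : DifferentiableAt ℝ G E := by
    have h1 : ContDiffOn ℝ 1 (fderiv ℝ f) {E : Fin N → ℝ | Dst N E} :=
      hf.fderiv_of_isOpen (isOpen_dst N) (by norm_num)
    have h2 : ContDiffOn ℝ 1 G {E : Fin N → ℝ | Dst N E} := h1.clm_apply contDiffOn_const
    exact (h2.contDiffAt ((isOpen_dst N).mem_nhds hE)).differentiableAt one_ne_zero
  have hmem : ∀ᶠ t in nhds (E i), Function.update E i t ∈ {E : Fin N → ℝ | Dst N E} := by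
    have hc : ContinuousAt (fun t => Function.update E i t) (E i) :=
      (hasDerivAt_update E i (E i)).continuousAt
    have hnh : {E : Fin N → ℝ | Dst N E} ∈ nhds (Function.update E i (E i)) := by
      rw [Function.update_eq_self]; exact (isOpen_dst N).mem_nhds hE
    exact hc.preimage_mem_nhds hnh
  have hev : (fun t => pd N i f (Function.update E i t))
      =ᶠ[nhds (E i)] (fun t => G (Function.update E i t)) := by
    filter_upwards [hmem] with t ht
    exact pd_eq_fderiv hf ht i
  rw [hev.differentiableAt_iff]
  exact DifferentiableAt.comp _ (by rw [Function.update_eq_self]; exact hGdiff)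
    (hasDerivAt_update E i (E i)).differentiableAt
lemma hasDerivAt_phi_line {η : ℝ} (hη : η ≠ 0) (hf : ContDiffOn ℝ 2 f {E : Fin N → ℝ | Dst N E})
    (hE : Dst N E) (i : Fin N) :
    HasDerivAt (fun t => (vdm N (Function.update E i t))⁻¹
        * Real.exp (((N : ℝ) / (2 * η)) * ∑ j, (Function.update E i t j)^2)
        * f (Function.update E i t))
      ((vdm N E)⁻¹ * Real.exp (((N : ℝ) / (2 * η)) * ∑ j, (E j)^2)
        * ((-(sfn N E i) + ((N:ℝ)/η) * E i) * f E + pd N i f E)) (E i) := by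
  have hV := hasDerivAt_vdm_line hE i
  have hVinv := hV.inv (by rw [Function.update_eq_self]; exact vdm_ne_zero hE)
  have hexp := (hasDerivAt_g_line η E i).exp
  have hfl := hasDerivAt_f_line hf hE i
  have H := (hVinv.mul hexp).mul hfl
  refine H.congr_deriv ?_
  symm
  simp only [Function.update_eq_self, Pi.inv_apply, Pi.mul_apply]
  have hv := vdm_ne_zero hE
  rw [show ((N:ℝ)/η) = (N:ℝ) * η⁻¹ from div_eq_mul_inv _ _]
  generalize ((N:ℝ) * η⁻¹) = c
  field_simp

lemma pd_phi {η : ℝ} (hη : η ≠ 0) (hf : ContDiffOn ℝ 2 f {E : Fin N → ℝ | Dst N E})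
    (hE : Dst N E) (i : Fin N) :
    pd N i (fun E' => (vdm N E')⁻¹ * Real.exp (((N : ℝ) / (2 * η)) * ∑ j, (E' j)^2) * f E') E
      = (vdm N E)⁻¹ * Real.exp (((N : ℝ) / (2 * η)) * ∑ j, (E j)^2)
        * ((-(sfn N E i) + ((N:ℝ)/η) * E i) * f E + pd N i f E) :=
  (hasDerivAt_phi_line hη hf hE i).deriv

lemma pd2_phi {η : ℝ} (hη : η ≠ 0) (hf : ContDiffOn ℝ 2 f {E : Fin N → ℝ | Dst N E})
    (hE : Dst N E) (i : Fin N) :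
    pd N i (pd N i (fun E' => (vdm N E')⁻¹
        * Real.exp (((N : ℝ) / (2 * η)) * ∑ j, (E' j)^2) * f E')) E
      = (vdm N E)⁻¹ * Real.exp (((N : ℝ) / (2 * η)) * ∑ j, (E j)^2)
        * ((-(sfn N E i) + ((N:ℝ)/η) * E i)^2 * f E
          + 2 * (-(sfn N E i) + ((N:ℝ)/η) * E i) * pd N i f E
          + (tfn N E i + (N:ℝ)/η) * f E + pd N i (pd N i f) E) := by
  have hmem : ∀ᶠ t in nhds (E i), Function.update E i t ∈ {E : Fin N → ℝ | Dst N E} := by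
    have hc' : ContinuousAt (fun t => Function.update E i t) (E i) :=
      (hasDerivAt_update E i (E i)).continuousAt
    have hnh : {E : Fin N → ℝ | Dst N E} ∈ nhds (Function.update E i (E i)) := by
      rw [Function.update_eq_self]; exact (isOpen_dst N).mem_nhds hE
    exact hc'.preimage_mem_nhds hnh
  have hev : (fun t => pd N i (fun E' => (vdm N E')⁻¹
        * Real.exp (((N : ℝ) / (2 * η)) * ∑ j, (E' j)^2) * f E') (Function.update E i t))
      =ᶠ[nhds (E i)] (fun t => (vdm N (Function.update E i t))⁻¹
        * Real.exp (((N : ℝ) / (2 * η)) * ∑ j, (Function.update E i t j)^2)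
        * ((-(sfn N (Function.update E i t) i) + ((N:ℝ)/η) * Function.update E i t i)
            * f (Function.update E i t) + pd N i f (Function.update E i t))) := by
    filter_upwards [hmem] with t ht
    exact pd_phi hη hf ht i
  have hV := hasDerivAt_vdm_line hE i
  have hVinv := hV.inv (by rw [Function.update_eq_self]; exact vdm_ne_zero hE)
  have hexp := (hasDerivAt_g_line η E i).exp
  have hfl := hasDerivAt_f_line hf hE i
  have hpdfl := hasDerivAt_pdf_line hf hE i
  have hs := (hasDerivAt_sfn_line hE i).neg
  have hid : HasDerivAt (fun t => ((N:ℝ)/η) * Function.update E i t i) (((N:ℝ)/η) * 1) (E i) := by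
    have h0 : (fun t => ((N:ℝ)/η) * Function.update E i t i) = fun t => ((N:ℝ)/η) * t := by
      funext t; rw [Function.update_self]
    rw [h0]
    exact (hasDerivAt_id (E i)).const_mul _
  have hinner := ((hs.add hid).mul hfl).add hpdfl
  have H := (hVinv.mul hexp).mul hinner
  have hderiv : pd N i (pd N i (fun E' => (vdm N E')⁻¹
      * Real.exp (((N : ℝ) / (2 * η)) * ∑ j, (E' j)^2) * f E')) E
      = deriv (fun t => (vdm N (Function.update E i t))⁻¹
        * Real.exp (((N : ℝ) / (2 * η)) * ∑ j, (Function.update E i t j)^2)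
        * ((-(sfn N (Function.update E i t) i) + ((N:ℝ)/η) * Function.update E i t i)
            * f (Function.update E i t) + pd N i f (Function.update E i t))) (E i) :=
    hev.deriv_eq
  rw [hderiv]
  have h2 : deriv (fun t => (vdm N (Function.update E i t))⁻¹
        * Real.exp (((N : ℝ) / (2 * η)) * ∑ j, (Function.update E i t j)^2)
        * ((-(sfn N (Function.update E i t) i) + ((N:ℝ)/η) * Function.update E i t i)
            * f (Function.update E i t) + pd N i f (Function.update E i t))) (E i)
      = (-(vdm N E * sfn N E i) / vdm N (Function.update E i (E i)) ^ 2 *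
            Real.exp (↑N / (2 * η) * ∑ j, Function.update E i (E i) j ^ 2) +
          (vdm N (Function.update E i (E i)))⁻¹ *
            (Real.exp (↑N / (2 * η) * ∑ j, Function.update E i (E i) j ^ 2) * (↑N / η * E i))) *
          ((-(sfn N (Function.update E i (E i)) i) + ↑N / η * Function.update E i (E i) i) *
            f (Function.update E i (E i)) + pd N i f (Function.update E i (E i))) +
        (vdm N (Function.update E i (E i)))⁻¹ *
          Real.exp (↑N / (2 * η) * ∑ j, Function.update E i (E i) j ^ 2) *
          ((- -tfn N E i + ↑N / η * 1) * f (Function.update E i (E i)) +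
            (-(sfn N (Function.update E i (E i)) i) + ↑N / η * Function.update E i (E i) i) *
              pd N i f E + pd N i (pd N i f) E) := H.deriv
  rw [h2]
  simp only [Function.update_eq_self, Function.update_self]
  have hv := vdm_ne_zero hE
  rw [show ((N:ℝ)/η) = (N:ℝ) * η⁻¹ from div_eq_mul_inv _ _]
  generalize ((N:ℝ) * η⁻¹) = c
  field_simp
  ring

end
end Aux

/-- conjugating the Schwinger–Dyson operator `L_SD` by
`Δ(E)⁻¹ e^{g(E)}`, where `g(E) = (N/(2η)) Σ_i E_i²`, gives (minus) the Hamiltonian of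
the non-interacting `N`-body harmonic oscillator: for every twice continuously
differentiable `f` on the open set `U` of tuples with pairwise distinct coordinates
and every `E ∈ U`,
`e^{-g(E)} Δ(E) · L_SD[Δ⁻¹ e^{g} f](E) = (η/N) Σ_i ∂²f/∂E_i²(E) − (N/η) Σ_i E_i² f(E)`. -/
theorem conjugated_LSD_is_harmonic_oscillator (N : ℕ) (hN : 1 ≤ N) (η : ℝ) (hη : 0 < η)
    (U : Set (Fin N → ℝ)) (hU : U = {E | ∀ i j, i ≠ j → E i ≠ E j})
    (f : (Fin N → ℝ) → ℝ) (hf : ContDiffOn ℝ 2 f U)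
    (g : (Fin N → ℝ) → ℝ) (hg : g = fun E => ((N : ℝ) / (2 * η)) * ∑ i, E i ^ 2)
    (E : Fin N → ℝ) (hE : E ∈ U) :
    Real.exp (-(g E)) * vdm N E
        * LSD N η (fun E' => (vdm N E')⁻¹ * Real.exp (g E') * f E') E
      = (η / N) * (∑ i, pd N i (pd N i f) E)
        - (N / η) * (∑ i, (E i) ^ 2 * f E) := by
  subst hU hg
  have hD : Dst N E := hE
  have hη' : η ≠ 0 := ne_of_gt hη
  have hN0 : (N:ℝ) ≠ 0 := Nat.cast_ne_zero.2 (by omega)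
  have hf' : ContDiffOn ℝ 2 f {E : Fin N → ℝ | Dst N E} := hf
  have hv := vdm_ne_zero hD
  have hX := Real.exp_ne_zero (((N : ℝ) / (2 * η)) * ∑ j, (E j)^2)
  simp only [LSD]
  have h1 : (∑ x : Fin N, pd N x (pd N x fun E' =>
        (vdm N E')⁻¹ * Real.exp (↑N / (2 * η) * ∑ i : Fin N, E' i ^ 2) * f E') E)
      = (vdm N E)⁻¹ * Real.exp (↑N / (2 * η) * ∑ j : Fin N, E j ^ 2) *
        ∑ i, ((-(sfn N E i) + ((N:ℝ)/η) * E i)^2 * f E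
          + 2 * (-(sfn N E i) + ((N:ℝ)/η) * E i) * pd N i f E
          + (tfn N E i + (N:ℝ)/η) * f E + pd N i (pd N i f) E) := by
    rw [Finset.sum_congr rfl (fun i _ => pd2_phi hη' hf' hD i), ← Finset.mul_sum]
  have h2 : (∑ x ∈ Finset.univ.filter (fun p : Fin N × Fin N => p.1 ≠ p.2),
        1 / (E x.1 - E x.2) *
          (pd N x.1 (fun E' => (vdm N E')⁻¹ * Real.exp (↑N / (2 * η) * ∑ i : Fin N, E' i ^ 2) * f E') E -
            pd N x.2 (fun E' => (vdm N E')⁻¹ * Real.exp (↑N / (2 * η) * ∑ i : Fin N, E' i ^ 2) * f E') E))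
      = (vdm N E)⁻¹ * Real.exp (↑N / (2 * η) * ∑ j : Fin N, E j ^ 2) *
        ∑ p ∈ Finset.univ.filter (fun p : Fin N × Fin N => p.1 ≠ p.2),
          (E p.1 - E p.2)⁻¹ *
            (((-(sfn N E p.1) + ((N:ℝ)/η) * E p.1) * f E + pd N p.1 f E)
              - ((-(sfn N E p.2) + ((N:ℝ)/η) * E p.2) * f E + pd N p.2 f E)) := by
    rw [Finset.mul_sum]
    refine Finset.sum_congr rfl fun p hp => ?_
    rw [pd_phi hη' hf' hD p.1, pd_phi hη' hf' hD p.2]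
    ring
  have h3 : (∑ x : Fin N, E x * pd N x (fun E' =>
        (vdm N E')⁻¹ * Real.exp (↑N / (2 * η) * ∑ i : Fin N, E' i ^ 2) * f E') E)
      = (vdm N E)⁻¹ * Real.exp (↑N / (2 * η) * ∑ j : Fin N, E j ^ 2) *
        ∑ k, E k * ((-(sfn N E k) + ((N:ℝ)/η) * E k) * f E + pd N k f E) := by
    rw [Finset.mul_sum]
    refine Finset.sum_congr rfl fun k _ => ?_
    rw [pd_phi hη' hf' hD k]
    ring
  rw [h1, h2, h3]
  have hS1 : (∑ i, ((-(sfn N E i) + ((N:ℝ)/η) * E i)^2 * f E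
        + 2 * (-(sfn N E i) + ((N:ℝ)/η) * E i) * pd N i f E
        + (tfn N E i + (N:ℝ)/η) * f E + pd N i (pd N i f) E))
      = (∑ i, (sfn N E i)^2) * f E
        - 2*((N:ℝ)/η) * (∑ i, E i * sfn N E i) * f E
        + ((N:ℝ)/η)^2 * (∑ i, E i^2) * f E
        - 2 * (∑ i, sfn N E i * pd N i f E)
        + 2*((N:ℝ)/η) * (∑ i, E i * pd N i f E)
        + (∑ i, (sfn N E i)^2) * f E + (N:ℝ)*((N:ℝ)/η)*f E
        + ∑ i, pd N i (pd N i f) E := by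
    have e : ∀ i : Fin N, (-(sfn N E i) + ((N:ℝ)/η) * E i)^2 * f E
        + 2 * (-(sfn N E i) + ((N:ℝ)/η) * E i) * pd N i f E
        + (tfn N E i + (N:ℝ)/η) * f E + pd N i (pd N i f) E
        = (sfn N E i)^2 * f E + (E i * sfn N E i) * (-2*((N:ℝ)/η)*f E)
          + (E i^2) * (((N:ℝ)/η)^2*f E) + (sfn N E i * pd N i f E) * (-2)
          + (E i * pd N i f E) * (2*((N:ℝ)/η)) + tfn N E i * f E + ((N:ℝ)/η)*f E
          + pd N i (pd N i f) E := fun i => by ring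
    rw [Finset.sum_congr rfl (fun i _ => e i)]
    simp only [Finset.sum_add_distrib]
    rw [← Finset.sum_mul, ← Finset.sum_mul, ← Finset.sum_mul, ← Finset.sum_mul,
      ← Finset.sum_mul, ← Finset.sum_mul, ← Finset.sum_mul, Finset.sum_const,
      Finset.card_univ, Fintype.card_fin, nsmul_eq_mul, ← sum_sq_eq_sum_tfn hD]
    ring
  have hS2 : (∑ p ∈ Finset.univ.filter (fun p : Fin N × Fin N => p.1 ≠ p.2),
        (E p.1 - E p.2)⁻¹ *
          (((-(sfn N E p.1) + ((N:ℝ)/η) * E p.1) * f E + pd N p.1 f E)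
            - ((-(sfn N E p.2) + ((N:ℝ)/η) * E p.2) * f E + pd N p.2 f E)))
      = (2 * ∑ i, sfn N E i * sfn N E i) * (-(f E))
        + ((N:ℝ)^2 - N) * (((N:ℝ)/η) * f E)
        + 2 * ∑ i, sfn N E i * pd N i f E := by
    have e : ∀ p ∈ Finset.univ.filter (fun p : Fin N × Fin N => p.1 ≠ p.2),
        (E p.1 - E p.2)⁻¹ *
          (((-(sfn N E p.1) + ((N:ℝ)/η) * E p.1) * f E + pd N p.1 f E)
            - ((-(sfn N E p.2) + ((N:ℝ)/η) * E p.2) * f E + pd N p.2 f E))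
        = ((E p.1 - E p.2)⁻¹ * (sfn N E p.1 - sfn N E p.2)) * (-(f E))
          + ((E p.1 - E p.2)⁻¹ * (E p.1 - E p.2)) * (((N:ℝ)/η) * f E)
          + (E p.1 - E p.2)⁻¹ * (pd N p.1 f E - pd N p.2 f E) := fun p _ => by ring
    rw [Finset.sum_congr rfl e, Finset.sum_add_distrib, Finset.sum_add_distrib,
      ← Finset.sum_mul, ← Finset.sum_mul, sum_offdiag_pair (sfn N E),
      sum_offdiag_count hN hD, sum_offdiag_pair (fun i => pd N i f E)]
  have hS3 : (∑ k, E k * ((-(sfn N E k) + ((N:ℝ)/η) * E k) * f E + pd N k f E))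
      = (∑ i, E i * sfn N E i) * (-(f E)) + (∑ i, E i^2) * (((N:ℝ)/η) * f E)
        + ∑ i, E i * pd N i f E := by
    have e : ∀ k : Fin N, E k * ((-(sfn N E k) + ((N:ℝ)/η) * E k) * f E + pd N k f E)
        = (E k * sfn N E k) * (-(f E)) + (E k^2) * (((N:ℝ)/η) * f E)
          + E k * pd N k f E := fun k => by ring
    rw [Finset.sum_congr rfl (fun k _ => e k)]
    simp only [Finset.sum_add_distrib]
    rw [← Finset.sum_mul, ← Finset.sum_mul]
  have hss : (∑ i, sfn N E i * sfn N E i) = ∑ i, (sfn N E i)^2 :=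
    Finset.sum_congr rfl (fun i _ => (sq (sfn N E i)).symm)
  have hR : (∑ i, E i ^ 2 * f E) = (∑ i, E i^2) * f E := (Finset.sum_mul _ _ _).symm
  rw [hS1, hS2, hS3, hss, hR, Real.exp_neg]
  field_simp
  ring
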